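/- Let ℓ₁, …, ℓₙ with n ≥ 2 be Lyndon words over a totally ordered alphabet such that ℓ_{i+1} is a prefix of ℓᵢ for each 1 ≤ i ≤ n−1. Then (ℓ₁⋯ℓ_{n−1}ℓₙ)^ω ≤ (ℓ₁⋯ℓ_{n−1})^ω in the lexicographic order on infinite words. -/

import Mathlib

variable {A : Type*} [LinearOrder A] [Inhabited A]

/-- The infinite periodic word `u^ω = uuu⋯`, as a function `ℕ → A`. -/
def omegaPow (u : List A) : ℕ → A := fun n => u.getD (n % u.length) default

/-- Lexicographic order on infinite words: `s < t` iff at the first position where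
they differ, `s` has the smaller letter. -/
def lexLt (s t : ℕ → A) : Prop := ∃ k, (∀ i < k, s i = t i) ∧ s k < t k

/-- Non-strict lexicographic order on infinite words. -/
def lexLe (s t : ℕ → A) : Prop := lexLt s t ∨ s = t

/-- A nonempty word `w` is a Lyndon word: `w` is lexicographically smaller than
each of its nonempty proper suffixes. -/
def IsLyndon (w : List A) : Prop :=
  w ≠ [] ∧ ∀ v, v <:+ w → v ≠ [] → v ≠ w → List.Lex (· < ·) w v

lemma omegaPow_lt (u : List A) {i : ℕ} (h : i < u.length) :
    omegaPow u i = u.getD i default := by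
  simp [omegaPow, Nat.mod_eq_of_lt h]

lemma omegaPow_add (u : List A) (i : ℕ) :
    omegaPow u (i + u.length) = omegaPow u i := by
  simp [omegaPow, Nat.add_mod_right]

lemma lex_exists {l t : List A} (h : List.Lex (· < ·) l t) (hlen : t.length ≤ l.length) :
    ∃ k < t.length, (∀ i < k, l.getD i default = t.getD i default) ∧
      l.getD k default < t.getD k default := by
  induction h with
  | nil => simp at hlen
  | @rel a l' b t' hab => exact ⟨0, by simp, fun i hi => by omega, by simpa using hab⟩
  | @cons a l' t' h ih =>
      obtain ⟨k, hk, hag, hlt⟩ := ih (by simpa using hlen)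
      refine ⟨k + 1, by simpa using hk, ?_, by simpa using hlt⟩
      intro i hi
      cases i with
      | zero => simp
      | succ j => simpa using hag j (by omega)

lemma getD_flatten_replicate (ℓ : List A) {k j : ℕ} (hj : j < k * ℓ.length) :
    (List.flatten (List.replicate k ℓ)).getD j default = ℓ.getD (j % ℓ.length) default := by
  induction k generalizing j with
  | zero => omega
  | succ k ih =>
      rw [List.replicate_succ, List.flatten_cons]
      by_cases h : j < ℓ.length
      · rw [List.getD_append _ _ _ _ h, Nat.mod_eq_of_lt h]
      · push_neg at h
        have hs : (k + 1) * ℓ.length = k * ℓ.length + ℓ.length := by ring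
        rw [List.getD_append_right _ _ _ _ h, ih (by omega), Nat.mod_eq_sub_mod h]

lemma omegaPow_flatten_replicate (ℓ : List A) (hb : 0 < ℓ.length) {k : ℕ} (hk : 0 < k) :
    omegaPow (List.flatten (List.replicate k ℓ)) = omegaPow ℓ := by
  have hlen : (List.flatten (List.replicate k ℓ)).length = k * ℓ.length := by
    simp [List.length_flatten, List.map_replicate, List.sum_replicate, smul_eq_mul, mul_comm]
  funext n
  have hkb : 0 < k * ℓ.length := by positivity
  unfold omegaPow
  rw [hlen, getD_flatten_replicate ℓ (Nat.mod_lt _ hkb),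
    Nat.mod_mod_of_dvd n (dvd_mul_left ℓ.length k)]

lemma getElem_zero_prefix_flatten (M : List (List A)) (h : 0 < M.length) :
    (M[0]'h) <+: M.flatten := by
  cases M with
  | nil => simp at h
  | cons a tl => simpa using List.prefix_append a tl.flatten

lemma prefix_getD {x y : List A} (hxy : x <+: y) {j : ℕ} (hj : j < x.length) :
    x.getD j default = y.getD j default := by
  rw [List.getD_eq_getElem _ _ hj, List.getD_eq_getElem _ _ (lt_of_lt_of_le hj hxy.length_le)]
  exact hxy.getElem hj

/-- Let `ℓ₁, …, ℓₙ` (`n ≥ 2`) be Lyndon words such that `ℓ_{i+1}` is a prefix of `ℓᵢ`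
for each `i`. Then `(ℓ₁⋯ℓ_{n-1}ℓₙ)^ω ≤ (ℓ₁⋯ℓ_{n-1})^ω`. -/
theorem omegaPow_flatten_le_dropLast (L : List (List A)) (hlen : 2 ≤ L.length)
    (hLyn : ∀ l ∈ L, IsLyndon l)
    (hchain : ∀ i : ℕ, (h : i + 1 < L.length) → (L[i + 1]'h) <+: (L[i]'(by omega))) :
    lexLe (omegaPow L.flatten) (omegaPow L.dropLast.flatten) := by
  have hL0 : L ≠ [] := by rintro rfl; simp at hlen
  have h0 : 0 < L.length := by omega
  have hn1 : L.length - 1 < L.length := by omega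
  have hchain' : ∀ i j (hij : i ≤ j) (hj : j < L.length),
      L[j]'hj <+: L[i]'(Nat.lt_of_le_of_lt hij hj) := by
    intro i j hij hj
    induction j with
    | zero =>
        have : i = 0 := by omega
        subst this; exact List.prefix_refl _
    | succ j ih =>
        rcases Nat.lt_or_ge i (j + 1) with h | h
        · exact (hchain j hj).trans (ih (by omega) (by omega))
        · have : i = j + 1 := by omega
          subst this; exact List.prefix_refl _
  set ℓ := L[0]'h0 with hℓdef
  set z := L[L.length - 1]'hn1 with hzdef
  have hzℓ : z <+: ℓ := hchain' 0 (L.length - 1) (by omega) hn1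
  have hLyn1 : IsLyndon ℓ := hLyn _ (List.getElem_mem _)
  have hLynz : IsLyndon z := hLyn _ (List.getElem_mem _)
  set u := L.dropLast.flatten with hudef
  set w := L.flatten with hwdef
  have hwu : w = u ++ z := by
    conv_lhs => rw [hwdef, ← List.dropLast_append_getLast hL0]
    rw [List.flatten_append]
    simp [List.getLast_eq_getElem, hzdef, hudef]
  have hfl : 0 < L.dropLast.length := by
    rw [List.length_dropLast]; omega
  have hℓu : ℓ <+: u := by
    have h1 : L.dropLast[0]'hfl = ℓ := List.getElem_dropLast ..
    rw [← h1]; exact getElem_zero_prefix_flatten _ hfl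
  have hb_le_m : ℓ.length ≤ u.length := hℓu.length_le
  have ha_le_b : z.length ≤ ℓ.length := hzℓ.length_le
  have hb_pos : 0 < ℓ.length := List.length_pos_iff.mpr hLyn1.1
  have ha_pos : 0 < z.length := List.length_pos_iff.mpr hLynz.1
  have hwlen : w.length = u.length + z.length := by rw [hwu]; simp
  rcases eq_or_lt_of_le ha_le_b with hab | hab
  · -- all words equal; the two omega powers coincide
    right
    have hzeq : z = ℓ := hzℓ.eq_of_length hab
    have hall : ∀ x ∈ L, x = ℓ := by
      intro x hx
      obtain ⟨i, hi, rfl⟩ := List.getElem_of_mem hx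
      have h1 := hchain' 0 i (by omega) hi
      have h2 := hchain' i (L.length - 1) (by omega) hn1
      have hle1 : (L[i]).length ≤ ℓ.length := h1.length_le
      have hle2 : z.length ≤ (L[i]).length := h2.length_le
      have h3 : ℓ.length ≤ (L[i]).length := hab ▸ hle2
      exact h1.eq_of_length (le_antisymm hle1 h3)
    have hL : L = List.replicate L.length ℓ := List.eq_replicate_length.mpr hall
    have hdl : L.dropLast = List.replicate (L.length - 1) ℓ := by
      conv_lhs => rw [hL]
      rw [List.dropLast_replicate]
    rw [hwdef, hudef, hdl]
    conv_lhs => rw [hL]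
    rw [omegaPow_flatten_replicate ℓ hb_pos (by omega),
      omegaPow_flatten_replicate ℓ hb_pos (by omega)]
  · -- main case: z is a proper prefix of ℓ
    left
    set t := ℓ.drop z.length with htdef
    have htlen : t.length = ℓ.length - z.length := by simp [htdef]
    have htne : t ≠ [] := by
      intro h
      rw [h] at htlen; simp at htlen; omega
    have hlex : List.Lex (· < ·) ℓ t :=
      hLyn1.2 t (List.drop_suffix _ _) htne
        (by intro h; rw [h] at htlen; omega)
    obtain ⟨k, hk, hag, hlt⟩ := lex_exists hlex (by omega)
    have htd : ∀ j, j < t.length → t.getD j default = ℓ.getD (z.length + j) default := by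
      intro j hj
      rw [List.getD_eq_getElem _ _ hj, List.getD_eq_getElem _ _ (by rw [htlen] at hj; omega)]
      simp [htdef]
    -- w-side value at offset j past a full period
    have hwval : ∀ j, j < ℓ.length → omegaPow w (u.length + z.length + j) = ℓ.getD j default := by
      intro j hj
      have hjw : j < w.length := by omega
      have : u.length + z.length + j = j + w.length := by omega
      rw [this, omegaPow_add, omegaPow_lt w hjw, hwu,
        List.getD_append _ _ _ _ (by omega), prefix_getD hℓu hj]
    -- u-side value at such positions
    have huval : ∀ j, z.length + j < ℓ.length →
        omegaPow u (u.length + z.length + j) = ℓ.getD (z.length + j) default := by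
      intro j hj
      have hmod : (u.length + z.length + j) % u.length = z.length + j := by
        rw [Nat.add_assoc, Nat.add_mod_left, Nat.mod_eq_of_lt (by omega)]
      unfold omegaPow
      rw [hmod, prefix_getD hℓu (by omega)]
    -- agreement on the first full period
    have hagree1 : ∀ i < u.length + z.length, omegaPow w i = omegaPow u i := by
      intro i hi
      rw [omegaPow_lt w (by omega)]
      rcases Nat.lt_or_ge i u.length with h | h
      · rw [omegaPow_lt u h, hwu, List.getD_append _ _ _ _ h]
      · have h2 : i % u.length = i - u.length := by
          rw [Nat.mod_eq_sub_mod h, Nat.mod_eq_of_lt (by omega)]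
        have hia : i - u.length < z.length := by omega
        have : omegaPow u i = u.getD (i - u.length) default := by
          unfold omegaPow; rw [h2]
        rw [this, hwu, List.getD_append_right _ _ _ _ h,
          prefix_getD hzℓ hia, prefix_getD hℓu (by omega)]
    refine ⟨u.length + z.length + k, ?_, ?_⟩
    · intro i hi
      rcases Nat.lt_or_ge i (u.length + z.length) with h | h
      · exact hagree1 i h
      · have hj : i = u.length + z.length + (i - u.length - z.length) := by omega
        set j := i - u.length - z.length with hjdef
        have hjk : j < k := by omega
        have hjt : j < t.length := by omega
        have hjb : z.length + j < ℓ.length := by omega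
        rw [hj, hwval j (by omega), huval j hjb, ← htd j hjt]
        exact hag j hjk
    · have hkt : k < t.length := hk
      have hkb : z.length + k < ℓ.length := by omega
      rw [hwval k (by omega), huval k hkb, ← htd k hkt]
      exact hlt
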